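/- Let A⁺, A⁻ : ℝ → ℝ and u⁺, u⁻, û, c ∈ ℝ. Assume the Rankine–Hugoniot condition A⁺(u⁺) = A⁻(u⁻), that û does NOT lie strictly between u⁻ and u⁺, that c does not lie strictly between u⁻ and u⁺, that c ∉ {u⁺, u⁻, û}, and that the Kruzkov entropy inequality holds at c. Then [sign(u⁺−c) − sign(u⁻−c)]·A⁺(u⁺) ≤ 2·sign(u⁺−û)·[A⁺(c)·𝟙_{(û,u⁺)}(c) − A⁻(c)·𝟙_{(û,u⁻)}(c)]. -/

import Mathlib

open MeasureTheory Filter Set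

/-
Subtracting the Rankine–Hugoniot condition from the Kruzkov inequality leaves the claim up to one
discrepancy: the term `sign(u⁻ − û)·A⁻(c)·𝟙_{(û,u⁻)}(c)` has to be replaced by the same term with
`sign(u⁺ − û)`. Whenever the indicator is nonzero, `c` lies between `û` and `u⁻` but not between
`u⁻` and `u⁺`, so `u⁺ ≠ û`; as `û` is not between `u⁻` and `u⁺` either, `u⁻` and `u⁺` lie on
the same side of `û`.
-/

/-- The Kruzkov entropy inequality at `c` for data `(um, up, uh)`:
`A⁺(u⁺)·sign(u⁺−c) − 2·sign(u⁺−û)·A⁺(c)·𝟙_{(û,u⁺)}(c) ≤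
 A⁻(u⁻)·sign(u⁻−c) − 2·sign(u⁻−û)·A⁻(c)·𝟙_{(û,u⁻)}(c)`. -/
def KruzkovIneq (Ap Am : ℝ → ℝ) (um up uh c : ℝ) : Prop :=
  Ap up * Real.sign (up - c) -
      2 * Real.sign (up - uh) * Ap c * Set.indicator (Set.uIoo uh up) (1 : ℝ → ℝ) c
    ≤ Am um * Real.sign (um - c) -
      2 * Real.sign (um - uh) * Am c * Set.indicator (Set.uIoo uh um) (1 : ℝ → ℝ) c

lemma Real.sign_sub_eq_of_notMem_uIoo {a b x : ℝ} (hx : x ∉ uIoo a b) (ha : a ≠ x)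
    (hb : b ≠ x) : Real.sign (a - x) = Real.sign (b - x) := by
  rcases ha.lt_or_gt with ha | ha <;> rcases hb.lt_or_gt with hb | hb
  · rw [Real.sign_of_neg (sub_neg.2 ha), Real.sign_of_neg (sub_neg.2 hb)]
  · exact absurd (mem_uIoo_of_lt ha hb) hx
  · exact absurd (mem_uIoo_of_gt hb ha) hx
  · rw [Real.sign_of_pos (sub_pos.2 ha), Real.sign_of_pos (sub_pos.2 hb)]

lemma sign_mul_indicator_uIoo_eq {um up uh c : ℝ} (huh : uh ∉ uIoo um up)
    (hc : c ∉ uIoo um up) :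
    Real.sign (um - uh) * indicator (uIoo uh um) (1 : ℝ → ℝ) c =
      Real.sign (up - uh) * indicator (uIoo uh um) (1 : ℝ → ℝ) c := by
  by_cases hm : c ∈ uIoo uh um
  · have hum : um ≠ uh := by
      rintro rfl
      simp at hm
    have hup : up ≠ uh := by
      rintro rfl
      exact hc (uIoo_comm up um ▸ hm)
    rw [Real.sign_sub_eq_of_notMem_uIoo huh hum hup]
  · simp only [indicator_of_notMem hm, mul_zero]

theorem stmt_8_general (Ap Am : ℝ → ℝ) (up um uh c : ℝ)
    (hRH : Ap up = Am um)
    (huh : uh ∉ Set.uIoo um up)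
    (hc : c ∉ Set.uIoo um up)
    (hkruz : KruzkovIneq Ap Am um up uh c) :
    (Real.sign (up - c) - Real.sign (um - c)) * Ap up ≤
      2 * Real.sign (up - uh) *
        (Ap c * Set.indicator (Set.uIoo uh up) (1 : ℝ → ℝ) c -
         Am c * Set.indicator (Set.uIoo uh um) (1 : ℝ → ℝ) c) := by
  have hsign := sign_mul_indicator_uIoo_eq huh hc
  unfold KruzkovIneq at hkruz
  rw [← hRH] at hkruz
  linear_combination hkruz - 2 * Am c * hsign

theorem stmt_8 (Ap Am : ℝ → ℝ) (up um uh c : ℝ)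
    (hRH : Ap up = Am um)
    (huh : uh ∉ Set.uIoo um up)
    (hc : c ∉ Set.uIoo um up)
    (hcup : c ≠ up) (hcum : c ≠ um) (hcuh : c ≠ uh)
    (hkruz : KruzkovIneq Ap Am um up uh c) :
    (Real.sign (up - c) - Real.sign (um - c)) * Ap up ≤
      2 * Real.sign (up - uh) *
        (Ap c * Set.indicator (Set.uIoo uh up) (1 : ℝ → ℝ) c -
         Am c * Set.indicator (Set.uIoo uh um) (1 : ℝ → ℝ) c) :=
  stmt_8_general Ap Am up um uh c hRH huh hc hkruz
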